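/- Let θ ∈ (0,1] and let H_θ = { r·exp(iπφ) : r > 0, φ ∈ [θ, 1] } ⊂ ℂ. Then for any k ≥ 1 and any z₁, …, z_k ∈ H_θ, we have |z₁ + ⋯ + z_k| / (|z₁| + ⋯ + |z_k|) ≥ sin²(πθ/2). -/

import Mathlib

open Complex Real

/-- The sector `H_θ` of nonzero complex numbers `r·exp(iπφ)` with `r > 0`, `φ ∈ [θ, 1]`. -/
def sector (θ : ℝ) : Set ℂ :=
  {z : ℂ | ∃ r φ : ℝ, 0 < r ∧ θ ≤ φ ∧ φ ≤ 1 ∧ z = (r : ℂ) * Complex.exp (π * φ * Complex.I)}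

/-! Rotating the sector `H_θ` by `-π(1+θ)/2` centres it on the positive real axis, where it has
half-opening `π(1-θ)/2`; every rotated point then has real part at least
`cos(π(1-θ)/2) = sin(πθ/2)` times its modulus. Projecting onto the bisector is `1`-Lipschitz and
additive, so `sin(πθ/2) · ∑ ‖zᵢ‖ ≤ ‖∑ zᵢ‖`, and `sin² ≤ sin` finishes. -/

theorem mul_sum_norm_le_norm_sum_of_le_re_mul {ι : Type*} (s : Finset ι) (z : ι → ℂ)
    {u : ℂ} (hu : ‖u‖ = 1) {c : ℝ} (hz : ∀ i ∈ s, c * ‖z i‖ ≤ (z i * u).re) :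
    c * ∑ i ∈ s, ‖z i‖ ≤ ‖∑ i ∈ s, z i‖ :=
  calc c * ∑ i ∈ s, ‖z i‖ = ∑ i ∈ s, c * ‖z i‖ := Finset.mul_sum _ _ _
    _ ≤ ∑ i ∈ s, (z i * u).re := Finset.sum_le_sum hz
    _ = ((∑ i ∈ s, z i) * u).re := by rw [Finset.sum_mul, Complex.re_sum]
    _ ≤ ‖(∑ i ∈ s, z i) * u‖ := Complex.re_le_norm _
    _ = ‖∑ i ∈ s, z i‖ := by rw [norm_mul, hu, mul_one]

theorem ne_zero_of_mem_sector {θ : ℝ} {w : ℂ} (hw : w ∈ sector θ) : w ≠ 0 := by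
  obtain ⟨r, φ, hr, -, -, rfl⟩ := hw
  exact mul_ne_zero (ofReal_ne_zero.2 hr.ne') (Complex.exp_ne_zero _)

theorem sin_mul_norm_le_re_mul_exp_of_mem_sector {θ : ℝ} (hθ : -1 ≤ θ) {w : ℂ}
    (hw : w ∈ sector θ) :
    Real.sin (π * θ / 2) * ‖w‖ ≤ (w * Complex.exp (↑(-(π * (1 + θ) / 2)) * I)).re := by
  obtain ⟨r, φ, hr, hθφ, hφ1, rfl⟩ := hw
  have hrot : (r : ℂ) * Complex.exp (π * φ * I) * Complex.exp (↑(-(π * (1 + θ) / 2)) * I)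
      = r * Complex.exp (↑(π * φ - π * (1 + θ) / 2) * I) := by
    rw [mul_assoc, ← Complex.exp_add]
    push_cast
    ring_nf
  have hnorm : ‖(r : ℂ) * Complex.exp (π * φ * I)‖ = r := by
    rw [norm_mul, Complex.norm_real, Real.norm_of_nonneg hr.le, ← ofReal_mul,
      Complex.norm_exp_ofReal_mul_I, mul_one]
  have hsin : Real.sin (π * θ / 2) = Real.cos (π * (1 - θ) / 2) := by
    rw [← Real.cos_pi_div_two_sub]
    ring_nf
  have hangle : |π * φ - π * (1 + θ) / 2| ≤ π * (1 - θ) / 2 := by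
    rw [abs_le]
    constructor <;> nlinarith [Real.pi_pos]
  have hcos : Real.sin (π * θ / 2) ≤ Real.cos (π * φ - π * (1 + θ) / 2) := by
    rw [hsin, ← Real.cos_abs (π * φ - π * (1 + θ) / 2)]
    exact Real.cos_le_cos_of_nonneg_of_le_pi (abs_nonneg _) (by nlinarith [Real.pi_pos]) hangle
  rw [hrot, hnorm, Complex.re_ofReal_mul, Complex.exp_ofReal_mul_I_re, mul_comm r]
  exact mul_le_mul_of_nonneg_right hcos hr.le

theorem sin_le_norm_sum_div_sum_norm_of_mem_sector {ι : Type*} {θ : ℝ} (hθ : -1 ≤ θ)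
    {s : Finset ι} (hs : s.Nonempty) {z : ι → ℂ} (hz : ∀ i ∈ s, z i ∈ sector θ) :
    Real.sin (π * θ / 2) ≤ ‖∑ i ∈ s, z i‖ / ∑ i ∈ s, ‖z i‖ := by
  have hpos : 0 < ∑ i ∈ s, ‖z i‖ :=
    Finset.sum_pos (fun i hi => norm_pos_iff.2 (ne_zero_of_mem_sector (hz i hi))) hs
  rw [le_div_iff₀ hpos]
  exact mul_sum_norm_le_norm_sum_of_le_re_mul s z (Complex.norm_exp_ofReal_mul_I _)
    fun i hi => sin_mul_norm_le_re_mul_exp_of_mem_sector hθ (hz i hi)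

/-- For `θ ∈ (0,1]` and `z₁, …, z_k` in the sector `H_θ`,
`|z₁ + ⋯ + z_k| / (|z₁| + ⋯ + |z_k|) ≥ sin²(πθ/2)`. -/
theorem sector_sum_abs_ratio_ge (θ : ℝ) (hθ0 : 0 < θ) (hθ1 : θ ≤ 1)
    (k : ℕ) (hk : 1 ≤ k) (z : Fin k → ℂ) (hz : ∀ i, z i ∈ sector θ) :
    Real.sin (π * θ / 2) ^ 2 ≤
      ‖∑ i, z i‖ / (∑ i, ‖z i‖) := by
  have hsin_nonneg : 0 ≤ Real.sin (π * θ / 2) :=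
    Real.sin_nonneg_of_nonneg_of_le_pi (by positivity) (by nlinarith [Real.pi_pos])
  have hne : (Finset.univ : Finset (Fin k)).Nonempty := Finset.univ_nonempty_iff.2 ⟨⟨0, hk⟩⟩
  calc Real.sin (π * θ / 2) ^ 2 ≤ Real.sin (π * θ / 2) := by
        nlinarith [Real.sin_le_one (π * θ / 2)]
    _ ≤ ‖∑ i, z i‖ / ∑ i, ‖z i‖ :=
      sin_le_norm_sum_div_sum_norm_of_mem_sector (by linarith) hne fun i _ => hz i
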